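/- arXiv:1004.4147 — 6 statements merged into one kernel-verified Lean document; each statement's English description precedes it below -/
import Mathlib

section
/- Let X and Y be complete separable metric spaces and γ ≥ 0 a σ-finite Borel measure on X × Y. Denote μ := π^X_# γ the first marginal. If γ vanishes outside the graph of a function f : X → Y (i.e., the set {(x,y) : y ≠ f(x)} has zero γ-outer measure), then f is μ-measurable and γ = (id_X × f)_# μ. -/
open MeasureTheory

/-- Measures on graphs are push-forwards: if a σ-finite Borel measure `γ` on
`X × Y` assigns zero outer measure to the complement of the graph of `f`, then
`f` is measurable with respect to (the completion of) the first marginal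
`μ = π^X_# γ`, and `γ = (id × f)_# μ`. -/
theorem measure_on_graph_is_pushforward
    {X Y : Type*} [MetricSpace X] [PolishSpace X] [MeasurableSpace X] [BorelSpace X]
    [MetricSpace Y] [PolishSpace Y] [MeasurableSpace Y] [BorelSpace Y]
    (γ : Measure (X × Y)) [SigmaFinite γ] (f : X → Y)
    (hγ : γ {p : X × Y | p.2 ≠ f p.1} = 0) :
    AEMeasurable f (γ.map Prod.fst) ∧
      γ = (γ.map Prod.fst).map (fun x => (x, f x)) := by
  classical
  by_cases hY : Nonempty Y
  swap
  · have hX : IsEmpty X := ⟨fun x => hY ⟨f x⟩⟩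
    have hXY : IsEmpty (X × Y) := ⟨fun p => hY ⟨p.2⟩⟩
    have hγ0 : γ = 0 := (Measure.eq_zero_of_isEmpty γ)
    constructor
    · exact (measurable_of_empty f).aemeasurable
    · simp [hγ0]
  obtain ⟨c⟩ := hY
  -- The null measurable hull of the complement of the graph
  set t : Set (X × Y) := toMeasurable γ {p : X × Y | p.2 ≠ f p.1} with ht_def
  have ht : MeasurableSet t := measurableSet_toMeasurable _ _
  have htnull : γ t = 0 := by
    rw [ht_def, measure_toMeasurable]; exact hγ
  set S : Set (X × Y) := tᶜ with hS_def
  have hS : MeasurableSet S := ht.compl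
  have hScnull : γ Sᶜ = 0 := by rwa [hS_def, compl_compl]
  have hSgraph : ∀ p ∈ S, p.2 = f p.1 := by
    intro p hp
    by_contra h
    exact hp (subset_toMeasurable γ _ h)
  haveI : StandardBorelSpace S := hS.standardBorel
  -- the projection restricted to S is a measurable embedding
  set g : S → X := fun p => (p : X × Y).1 with hg_def
  have hgmeas : Measurable g := measurable_fst.comp measurable_subtype_coe
  have hginj : Function.Injective g := by
    intro p q h
    apply Subtype.ext
    apply Prod.ext h
    rw [hSgraph _ p.2, hSgraph _ q.2]
    exact congrArg f h
  have hemb : MeasurableEmbedding g := hgmeas.measurableEmbedding hginj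
  -- extend the second coordinate along g to get a measurable version of f
  set F : X → Y := Function.extend g (fun p => ((p : X × Y).2)) (fun _ => c) with hF_def
  have hFmeas : Measurable F :=
    hemb.measurable_extend (measurable_snd.comp measurable_subtype_coe) measurable_const
  have hA : MeasurableSet (Set.range g) := hemb.measurableSet_range
  have hFA : ∀ x ∈ Set.range g, F x = f x := by
    rintro x ⟨p, rfl⟩
    rw [hF_def, hginj.extend_apply]
    exact (hSgraph _ p.2).trans (by rfl)
  -- the complement of the range of g is null for the marginal
  have hpre : Prod.fst ⁻¹' (Set.range g)ᶜ ⊆ Sᶜ := by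
    intro p hp
    intro hpS
    exact hp ⟨⟨p, hpS⟩, rfl⟩
  have hmarg : (γ.map Prod.fst) (Set.range g)ᶜ = 0 := by
    rw [Measure.map_apply measurable_fst hA.compl]
    exact measure_mono_null hpre hScnull
  have hae : f =ᵐ[γ.map Prod.fst] F := by
    refine measure_mono_null ?_ hmarg
    intro x hx
    intro hxA
    exact hx ((hFA x hxA).symm)
  refine ⟨⟨F, hFmeas, hae⟩, ?_⟩
  have hmapF : γ = (γ.map Prod.fst).map (fun x => (x, F x)) := by
    have hφ : Measurable fun x => (x, F x) := measurable_id.prodMk hFmeas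
    ext s hs
    rw [Measure.map_apply hφ hs, Measure.map_apply measurable_fst (hφ hs)]
    -- both sides agree up to the null set Sᶜ
    have key : ∀ p ∈ S, (p ∈ s ↔ p ∈ Prod.fst ⁻¹' ((fun x => (x, F x)) ⁻¹' s)) := by
      intro p hp
      have h1 : F p.1 = f p.1 := hFA p.1 ⟨⟨p, hp⟩, rfl⟩
      have h2 : (p.1, F p.1) = p := by
        rw [h1, ← hSgraph p hp]
      simp only [Set.mem_preimage, h2]
    symm
    apply measure_congr
    rw [Filter.eventuallyEq_set]
    have hSmem : S ∈ ae γ := compl_mem_ae_iff.mpr htnull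
    filter_upwards [hSmem] with p hp
    exact (key p hp).symm
  refine hmapF.trans (Measure.map_congr ?_)
  filter_upwards [hae] with x hx
  rw [hx]
end

section
/- Let X, Y be complete separable metric spaces with Borel probability measures μ on X and ν on Y. If a measure γ ∈ Γ(μ,ν) vanishes outside the graph of some function f : X → Y, then γ is the unique element of Γ(μ,ν) vanishing outside Graph(f); in particular γ is an extreme point of the convex set Γ(μ,ν). -/
open MeasureTheory

lemma graph_slice {X Y : Type*} [MetricSpace X] [PolishSpace X] [MeasurableSpace X] [BorelSpace X]
    [MetricSpace Y] [PolishSpace Y] [MeasurableSpace Y] [BorelSpace Y] [Nonempty Y]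
    (μ : Measure X) [IsProbabilityMeasure μ]
    (f : X → Y) (γ' : Measure (X × Y)) [IsFiniteMeasure γ']
    (h1 : γ'.map Prod.fst = μ)
    (h0 : γ' {p : X × Y | p.2 ≠ f p.1} = 0) {s : Set (X × Y)} (hs : MeasurableSet s) :
    γ' s = ∫⁻ x, Set.indicator {x : X | (x, f x) ∈ s} (fun _ => 1) x ∂μ := by
  have hfst : γ'.fst = μ := h1
  have hdis : Measure.compProd γ'.fst γ'.condKernel = γ' := γ'.disintegrate γ'.condKernel
  have hN : γ' (toMeasurable γ' {p : X × Y | p.2 ≠ f p.1}) = 0 := by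
    rw [measure_toMeasurable]; exact h0
  have hNm : MeasurableSet (toMeasurable γ' {p : X × Y | p.2 ≠ f p.1}) :=
    measurableSet_toMeasurable _ _
  have hint : ∫⁻ x, γ'.condKernel x
      (Prod.mk x ⁻¹' (toMeasurable γ' {p : X × Y | p.2 ≠ f p.1})) ∂μ = 0 := by
    rw [← hfst, ← Measure.compProd_apply hNm, hdis]
    exact hN
  have hmeas : Measurable fun x => γ'.condKernel x
      (Prod.mk x ⁻¹' (toMeasurable γ' {p : X × Y | p.2 ≠ f p.1})) :=
    ProbabilityTheory.Kernel.measurable_kernel_prodMk_left hNm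
  have hae : ∀ᵐ x ∂μ, γ'.condKernel x
      (Prod.mk x ⁻¹' (toMeasurable γ' {p : X × Y | p.2 ≠ f p.1})) = 0 :=
    (lintegral_eq_zero_iff hmeas).mp hint
  have hae2 : ∀ᵐ x ∂μ, γ'.condKernel x {f x}ᶜ = 0 := by
    filter_upwards [hae] with x hx
    refine measure_mono_null ?_ hx
    intro y hy
    exact subset_toMeasurable _ _ hy
  have hslice : ∀ᵐ x ∂μ, γ'.condKernel x (Prod.mk x ⁻¹' s)
      = Set.indicator {x : X | (x, f x) ∈ s} (fun _ => 1) x := by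
    filter_upwards [hae2] with x hx
    by_cases hmem : (x, f x) ∈ s
    · have h1' : γ'.condKernel x {f x} = 1 := by
        have h2 := measure_add_measure_compl (μ := γ'.condKernel x)
          (MeasurableSet.singleton (f x))
        rw [hx, add_zero, measure_univ] at h2
        exact h2
      have hle : γ'.condKernel x {f x} ≤ γ'.condKernel x (Prod.mk x ⁻¹' s) :=
        measure_mono (by simpa using hmem)
      have hub : γ'.condKernel x (Prod.mk x ⁻¹' s) ≤ 1 := prob_le_one
      rw [Set.indicator_of_mem (show x ∈ {x : X | (x, f x) ∈ s} from hmem)]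
      exact le_antisymm hub (h1' ▸ hle)
    · rw [Set.indicator_of_notMem (show x ∉ {x : X | (x, f x) ∈ s} from hmem)]
      refine measure_mono_null ?_ hx
      intro y hy hyf
      exact hmem (hyf ▸ hy)
  calc γ' s = ∫⁻ x, γ'.condKernel x (Prod.mk x ⁻¹' s) ∂μ := by
        rw [← hfst, ← Measure.compProd_apply hs, hdis]
      _ = _ := lintegral_congr_ae hslice

/-- A coupling `γ ∈ Γ(μ,ν)` which vanishes outside the graph of a function
`f : X → Y` is the unique element of `Γ(μ,ν)` vanishing outside that graph; in
particular `γ` is an extreme point of the convex set `Γ(μ,ν)`. -/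
theorem graph_coupling_unique_and_extreme
    {X Y : Type*} [MetricSpace X] [PolishSpace X] [MeasurableSpace X] [BorelSpace X]
    [MetricSpace Y] [PolishSpace Y] [MeasurableSpace Y] [BorelSpace Y]
    (μ : Measure X) (ν : Measure Y) [IsProbabilityMeasure μ] [IsProbabilityMeasure ν]
    (f : X → Y) (γ : Measure (X × Y))
    (hγ1 : γ.map Prod.fst = μ) (hγ2 : γ.map Prod.snd = ν)
    (h0 : γ {p : X × Y | p.2 ≠ f p.1} = 0) :
    (∀ γ' : Measure (X × Y), γ'.map Prod.fst = μ → γ'.map Prod.snd = ν →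
        γ' {p : X × Y | p.2 ≠ f p.1} = 0 → γ' = γ) ∧
    (∀ (γ₀ γ₁ : Measure (X × Y)) (t : NNReal), 0 < t → t < 1 →
        γ₀.map Prod.fst = μ → γ₀.map Prod.snd = ν →
        γ₁.map Prod.fst = μ → γ₁.map Prod.snd = ν →
        γ = (1 - t) • γ₀ + t • γ₁ → γ₀ = γ₁) := by
  have hprob : ∀ (ρ : Measure (X × Y)), ρ.map Prod.fst = μ → IsProbabilityMeasure ρ := by
    intro ρ hρ
    constructor
    have h : ρ.map Prod.fst Set.univ = 1 := by rw [hρ]; exact measure_univ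
    rwa [Measure.map_apply measurable_fst MeasurableSet.univ, Set.preimage_univ] at h
  have hY : Nonempty Y := by
    by_contra h
    have : IsEmpty Y := not_nonempty_iff.mp h
    have hpγ := hprob γ hγ1
    have h1 : γ Set.univ = 1 := measure_univ
    rw [Set.univ_eq_empty_iff.mpr inferInstance, measure_empty] at h1
    exact zero_ne_one h1
  have huniq : ∀ γ' : Measure (X × Y), γ'.map Prod.fst = μ →
      γ' {p : X × Y | p.2 ≠ f p.1} = 0 → γ' = γ := by
    intro γ' h1 hz
    have := hprob γ' h1
    have := hprob γ hγ1
    ext s hs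
    rw [graph_slice μ f γ' h1 hz hs, graph_slice μ f γ hγ1 h0 hs]
  constructor
  · intro γ' h1 _ hz; exact huniq γ' h1 hz
  · intro γ₀ γ₁ t ht0 ht1 h01 _ h11 _ hsum
    have h1t : (0 : NNReal) < 1 - t := tsub_pos_of_lt ht1
    have hz0 : γ₀ {p : X × Y | p.2 ≠ f p.1} = 0 := by
      have hle : ((1 - t : NNReal) : ENNReal) * γ₀ {p : X × Y | p.2 ≠ f p.1}
          ≤ γ {p : X × Y | p.2 ≠ f p.1} := by
        rw [hsum]
        simp [Measure.add_apply, Measure.smul_apply, smul_eq_mul]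
      rw [h0, nonpos_iff_eq_zero, mul_eq_zero] at hle
      rcases hle with h | h
      · exact absurd (by exact_mod_cast h) h1t.ne'
      · exact h
    have hz1 : γ₁ {p : X × Y | p.2 ≠ f p.1} = 0 := by
      have hle : ((t : NNReal) : ENNReal) * γ₁ {p : X × Y | p.2 ≠ f p.1}
          ≤ γ {p : X × Y | p.2 ≠ f p.1} := by
        rw [hsum]
        simp [Measure.add_apply, Measure.smul_apply, smul_eq_mul]
      rw [h0, nonpos_iff_eq_zero, mul_eq_zero] at hle
      rcases hle with h | h
      · exact absurd (by exact_mod_cast h) ht0.ne'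
      · exact h
    rw [huniq γ₀ h01 hz0, huniq γ₁ h11 hz1]
end

section
/- An m × n matrix (a_ij) with nonnegative entries, prescribed row sums m_i and column sums n_j, is an extreme point of the convex set A = {a_ij ≥ 0 : Σ_j a_ij = m_i, Σ_i a_ij = n_j} if and only if it is acyclic. -/
/-!
If `a` contains a cycle, let `D` be the matrix with `+1` and `-1` alternating along it. `D` has zero
row and column sums and is supported where `a` is positive, so for small `ε > 0` both `a ± ε D` lie
in the polytope and `a` is their midpoint.

Conversely, if `a` lies strictly between `x ≠ y` in the polytope, `D = x - y` is a nonzero matrix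
with zero row and column sums, supported where `a` is nonzero. A nonzero entry of `D` is never
alone in its row or column, so one can walk through nonzero entries of `D`, alternately changing
column and row; since there are finitely many rows and columns, the walk closes up into a cycle
of `D`, hence of `a`.
-/

open Finset Filter Topology

theorem exists_pos_forall_mul_abs_le {α : Type*} [Finite α] {u w : α → ℝ}
    (hu : ∀ t, 0 ≤ u t) (hw : ∀ t, u t = 0 → w t = 0) : ∃ ε > 0, ∀ t, ε * |w t| ≤ u t := by
  have h : ∀ t, ∀ᶠ ε in 𝓝 (0 : ℝ), ε * |w t| ≤ u t := fun t => by
    rcases (hu t).eq_or_lt with h0 | hpos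
    · simp [hw t h0.symm, ← h0]
    · exact ((continuous_mul_const |w t|).tendsto' 0 0 (zero_mul _)).eventually (ge_mem_nhds hpos)
  exact (eventually_all.2 h).exists_gt

theorem exists_ne_ne_zero_of_sum_eq_zero {α R : Type*} [Fintype α] [AddCommMonoid R]
    {f : α → R} (hf : ∑ x, f x = 0) {a : α} (ha : f a ≠ 0) : ∃ b ≠ a, f b ≠ 0 := by
  by_contra! h
  exact ha (by rw [← hf, sum_eq_single a (fun b _ => h b) (by simp)])

namespace Matrix

variable {ι κ R : Type*}

structure IsCycle [Zero R] (d : Matrix ι κ R) {k : ℕ} (i : Fin k → ι) (j : Fin k → κ) :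
    Prop where
  injective_row : Function.Injective i
  injective_col : Function.Injective j
  ne_zero : ∀ l, d (i l) (j l) ≠ 0
  ne_zero_rotate : ∀ l, d (i l) (j (finRotate k l)) ≠ 0

theorem IsCycle.mono [Zero R] {d e : Matrix ι κ R} {k : ℕ} {i : Fin k → ι} {j : Fin k → κ}
    (hc : d.IsCycle i j) (hde : ∀ x y, d x y ≠ 0 → e x y ≠ 0) : e.IsCycle i j :=
  ⟨hc.injective_row, hc.injective_col, fun l => hde _ _ (hc.ne_zero l),
    fun l => hde _ _ (hc.ne_zero_rotate l)⟩

section cycleMatrix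

variable [DecidableEq ι] [DecidableEq κ] (R) [Ring R] {k : ℕ} (i : Fin k → ι) (j : Fin k → κ)

def cycleMatrix : Matrix ι κ R :=
  ∑ l, (single (i l) (j l) 1 - single (i l) (j (finRotate k l)) 1)

theorem cycleMatrix_sum_row [Fintype κ] (x : ι) : ∑ y, cycleMatrix R i j x y = 0 := by
  simp only [cycleMatrix, sum_apply, sub_apply]
  rw [sum_comm]
  refine sum_eq_zero fun l _ => ?_
  simp [sum_sub_distrib, single_apply, ite_and]

theorem cycleMatrix_sum_col [Fintype ι] (y : κ) : ∑ x, cycleMatrix R i j x y = 0 := by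
  simp only [cycleMatrix, sum_apply, sub_apply]
  rw [sum_comm]
  simp only [sum_sub_distrib, single_apply, ite_and, sum_ite_eq, mem_univ, if_true]
  exact sub_eq_zero.2 (Equiv.sum_comp (finRotate k) fun l => if j l = y then (1 : R) else 0).symm

theorem cycleMatrix_apply_self (hk : 2 ≤ k) (hi : Function.Injective i)
    (hj : Function.Injective j) (l : Fin k) : cycleMatrix R i j (i l) (j l) = 1 := by
  obtain ⟨k, rfl⟩ := Nat.exists_eq_add_of_le' hk
  have hrot : finRotate (k + 2) l ≠ l := Equiv.Perm.mem_support.1 (by simp [support_finRotate])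
  rw [cycleMatrix, sum_apply, sum_eq_single l (fun l' _ hl' => ?_) (by simp), sub_apply,
    single_apply_same, single_apply_of_col_ne _ _ (hj.ne hrot), sub_zero]
  rw [sub_apply, single_apply_of_row_ne (hi.ne hl'), single_apply_of_row_ne (hi.ne hl'), sub_zero]

theorem cycleMatrix_ne_zero [Nontrivial R] (hk : 2 ≤ k) (hi : Function.Injective i)
    (hj : Function.Injective j) : cycleMatrix R i j ≠ 0 := fun h => by
  simpa [h] using cycleMatrix_apply_self R i j hk hi hj ⟨0, by omega⟩

variable {R i j} in
theorem IsCycle.cycleMatrix_apply_eq_zero {S : Type*} [Zero S] {d : Matrix ι κ S} {x : ι}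
    {y : κ} (hc : d.IsCycle i j) (hxy : d x y = 0) : cycleMatrix R i j x y = 0 := by
  refine (sum_apply x y _ _).trans (sum_eq_zero fun l _ => ?_)
  rw [sub_apply, single_apply_of_ne, single_apply_of_ne, sub_zero]
  · rintro ⟨rfl, rfl⟩
    exact hc.ne_zero_rotate l hxy
  · rintro ⟨rfl, rfl⟩
    exact hc.ne_zero l hxy

end cycleMatrix

/-- The walk `J 0, I 0, J 1, I 1, …` in the bipartite graph of rows and columns whose edges are
the nonzero entries of `d`; it never immediately backtracks. -/
structure IsAlternatingWalk [Zero R] (d : Matrix ι κ R) (I : ℕ → ι) (J : ℕ → κ) : Prop where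
  ne_zero : ∀ t, d (I t) (J t) ≠ 0
  ne_zero_succ : ∀ t, d (I t) (J (t + 1)) ≠ 0
  row_succ_ne : ∀ t, I (t + 1) ≠ I t
  col_succ_ne : ∀ t, J (t + 1) ≠ J t

theorem exists_isAlternatingWalk [AddCommMonoid R] [Fintype ι] [Fintype κ] {d : Matrix ι κ R}
    (hrow : ∀ i, ∑ j, d i j = 0) (hcol : ∀ j, ∑ i, d i j = 0) (hd : d ≠ 0) :
    ∃ I J, d.IsAlternatingWalk I J := by
  classical
  have step : ∀ p : {p : ι × κ // d p.1 p.2 ≠ 0}, ∃ q : {p : ι × κ // d p.1 p.2 ≠ 0},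
      d p.1.1 q.1.2 ≠ 0 ∧ q.1.1 ≠ p.1.1 ∧ q.1.2 ≠ p.1.2 := by
    rintro ⟨⟨i, j⟩, h⟩
    obtain ⟨j', hj', hij'⟩ := exists_ne_ne_zero_of_sum_eq_zero (hrow i) h
    obtain ⟨i', hi', hi'j'⟩ := exists_ne_ne_zero_of_sum_eq_zero (hcol j') hij'
    exact ⟨⟨(i', j'), hi'j'⟩, hij', hi', hj'⟩
  choose next hnext using step
  obtain ⟨i, j, h⟩ : ∃ i j, d i j ≠ 0 := by
    by_contra! h
    exact hd (Matrix.ext h)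
  let c : ℕ → {p : ι × κ // d p.1 p.2 ≠ 0} := fun t => next^[t] ⟨(i, j), h⟩
  have hc : ∀ t, c (t + 1) = next (c t) := fun t => Function.iterate_succ_apply' _ _ _
  refine ⟨fun t => (c t).1.1, fun t => (c t).1.2, fun t => (c t).2, fun t => ?_, fun t => ?_,
    fun t => ?_⟩ <;> simp only [hc]
  exacts [(hnext (c t)).1, (hnext (c t)).2.1, (hnext (c t)).2.2]

namespace IsAlternatingWalk

variable [Zero R] {d : Matrix ι κ R} {I : ℕ → ι} {J : ℕ → κ}

theorem isCycle (hw : d.IsAlternatingWalk I J) {s k : ℕ}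
    (hI : ∀ p q, s ≤ p → p < q → q < s + k → I p ≠ I q)
    (hJ : ∀ p q, s ≤ p → p < q → q < s + k → J p ≠ J q)
    (hclose : d (I (s + k - 1)) (J s) ≠ 0) :
    d.IsCycle (fun l : Fin k => I (s + l)) (fun l => J (s + l)) := by
  refine ⟨.of_lt_imp_ne fun l l' h => hI _ _ (by omega) (by simpa) (by omega),
    .of_lt_imp_ne fun l l' h => hJ _ _ (by omega) (by simpa) (by omega),
    fun l => hw.ne_zero _, fun l => ?_⟩
  obtain ⟨k, rfl⟩ : ∃ k', k = k' + 1 := ⟨k - 1, by have := l.isLt; omega⟩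
  rw [coe_finRotate]
  split_ifs with hl
  · simpa [hl] using hclose
  · simpa [add_assoc] using hw.ne_zero_succ (s + l)

theorem exists_isCycle [Finite ι] [Finite κ] (hw : d.IsAlternatingWalk I J) :
    ∃ k, 2 ≤ k ∧ ∃ (i : Fin k → ι) (j : Fin k → κ), d.IsCycle i j := by
  classical
  have hrep : ∃ T, ∃ s < T, J s = J T ∨ I s = I T := by
    obtain ⟨s, t, hst, h⟩ := Finite.exists_ne_map_eq_of_infinite J
    rcases hst.lt_or_gt with h' | h'
    exacts [⟨t, s, h', .inl h⟩, ⟨s, t, h', .inl h.symm⟩]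
  obtain ⟨s, hsT, hrepT⟩ := Nat.find_spec hrep
  set T := Nat.find hrep
  have hmin : ∀ p q, p < q → q < T → J p ≠ J q ∧ I p ≠ I q := fun p q hpq hqT => by
    simpa [not_or] using fun h => Nat.find_min hrep hqT ⟨p, hpq, h⟩
  -- `T` is the first time a row or column reappears. A repeated column `J s = J T` closes a cycle
  -- through steps `s, …, T - 1`; a repeated row `I s = I T` one through steps `s + 1, …, T`.
  by_cases hJT : ∃ s < T, J s = J T
  · obtain ⟨s, hsT, hJs⟩ := hJT
    have hsT' : s + 1 ≠ T := fun h => hw.col_succ_ne s (h ▸ hJs.symm)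
    refine ⟨T - s, by omega, _, _, hw.isCycle (s := s)
      (fun p q _ hpq hq => (hmin p q hpq (by omega)).2)
      (fun p q _ hpq hq => (hmin p q hpq (by omega)).1) ?_⟩
    rw [show s + (T - s) - 1 = T - 1 by omega, hJs]
    simpa [show T - 1 + 1 = T by omega] using hw.ne_zero_succ (T - 1)
  · push Not at hJT
    have hIs : I s = I T := hrepT.resolve_left (hJT s hsT)
    have hsT' : s + 1 ≠ T := fun h => hw.row_succ_ne s (h ▸ hIs.symm)
    refine ⟨T - s, by omega, _, _, hw.isCycle (s := s + 1) (fun p q hp hpq hq => ?_)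
      (fun p q hp hpq hq => ?_) ?_⟩
    · rcases (show q < T ∨ q = T by omega) with hq | rfl
      · exact (hmin p q hpq hq).2
      · exact hIs ▸ ((hmin s p (by omega) hpq).2.symm)
    · rcases (show q < T ∨ q = T by omega) with hq | rfl
      · exact (hmin p q hpq hq).1
      · exact hJT p hpq
    · rw [show s + 1 + (T - s) - 1 = T by omega, ← hIs]
      exact hw.ne_zero_succ s

end IsAlternatingWalk

theorem exists_isCycle_of_sum_eq_zero [AddCommMonoid R] [Fintype ι] [Fintype κ]
    {d : Matrix ι κ R} (hrow : ∀ i, ∑ j, d i j = 0) (hcol : ∀ j, ∑ i, d i j = 0) (hd : d ≠ 0) :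
    ∃ k, 2 ≤ k ∧ ∃ (i : Fin k → ι) (j : Fin k → κ), d.IsCycle i j :=
  let ⟨_, _, hw⟩ := exists_isAlternatingWalk hrow hcol hd
  hw.exists_isCycle

end Matrix

section TransportPolytope

variable {ι κ : Type*} [Fintype ι] [Fintype κ]

def transportPolytope (rs : ι → ℝ) (cs : κ → ℝ) : Set (Matrix ι κ ℝ) :=
  {b | (∀ i j, 0 ≤ b i j) ∧ (∀ i, ∑ j, b i j = rs i) ∧ (∀ j, ∑ i, b i j = cs j)}

variable {rs : ι → ℝ} {cs : κ → ℝ} {a D : Matrix ι κ ℝ}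

theorem add_mem_transportPolytope (ha : a ∈ transportPolytope rs cs)
    (hrow : ∀ i, ∑ j, D i j = 0) (hcol : ∀ j, ∑ i, D i j = 0) (hD : ∀ i j, |D i j| ≤ a i j) :
    a + D ∈ transportPolytope rs cs := by
  refine ⟨fun i j => ?_, fun i => ?_, fun j => ?_⟩
  · show 0 ≤ a i j + D i j
    linarith [neg_abs_le (D i j), hD i j]
  · simp [sum_add_distrib, ha.2.1 i, hrow i]
  · simp [sum_add_distrib, ha.2.2 j, hcol j]

theorem mem_extremePoints_transportPolytope_iff (ha : a ∈ transportPolytope rs cs) :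
    a ∈ (transportPolytope rs cs).extremePoints ℝ ↔
      ∀ D : Matrix ι κ ℝ, (∀ i, ∑ j, D i j = 0) → (∀ j, ∑ i, D i j = 0) →
        (∀ i j, a i j = 0 → D i j = 0) → D = 0 := by
  constructor
  · intro hext D hrow hcol hsupp
    obtain ⟨ε, hε, hεD⟩ := exists_pos_forall_mul_abs_le (u := fun p : ι × κ => a p.1 p.2)
      (w := fun p => D p.1 p.2) (fun p => ha.1 _ _) (fun p => hsupp _ _)
    have hbound : ∀ i j, |(ε • D) i j| ≤ a i j := fun i j => by
      simpa [abs_mul, abs_of_pos hε] using hεD (i, j)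
    have hplus := add_mem_transportPolytope ha (D := ε • D) (by simp [← mul_sum, hrow])
      (by simp [← mul_sum, hcol]) hbound
    have hminus := add_mem_transportPolytope ha (D := -(ε • D)) (by simp [← mul_sum, hrow])
      (by simp [← mul_sum, hcol]) (by simpa using hbound)
    have hseg : a ∈ openSegment ℝ (a + ε • D) (a + -(ε • D)) :=
      ⟨1 / 2, 1 / 2, by norm_num, by norm_num, by norm_num, by module⟩
    simpa [hε.ne'] using hext.2 hplus hminus hseg
  · intro h
    refine ⟨ha, fun x hx y hy hseg => ?_⟩
    obtain ⟨θ, η, hθ, hη, hθη, rfl⟩ := hseg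
    have hxy : x - y = 0 := h _ (by simp [sum_sub_distrib, hx.2.1, hy.2.1])
      (by simp [sum_sub_distrib, hx.2.2, hy.2.2]) fun i j hij => by
        have : θ * x i j + η * y i j = 0 := by simpa using hij
        have := hx.1 i j
        have := hy.1 i j
        simp only [Matrix.sub_apply]
        nlinarith
    rw [sub_eq_zero.1 hxy, ← add_smul, hθη, one_smul]

end TransportPolytope

/-- A nonnegative `m × n` matrix with prescribed row sums `rs` and column sums
`cs` is an extreme point of the convex set of all such matrices if and only if
it is acyclic: every cyclic product through `k ≥ 2` distinct rows and columns
whose "diagonal" entries are nonzero must vanish. -/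
theorem extreme_iff_acyclic
    {m n : ℕ} (rs : Fin m → ℝ) (cs : Fin n → ℝ)
    (A : Set (Matrix (Fin m) (Fin n) ℝ))
    (hA : A = {b : Matrix (Fin m) (Fin n) ℝ |
        (∀ i j, 0 ≤ b i j) ∧ (∀ i, ∑ j, b i j = rs i) ∧ (∀ j, ∑ i, b i j = cs j)})
    (a : Matrix (Fin m) (Fin n) ℝ) (ha : a ∈ A) :
    a ∈ Set.extremePoints ℝ A ↔
      (∀ (k : ℕ), 2 ≤ k → ∀ (i : Fin k → Fin m) (j : Fin k → Fin n),
        Function.Injective i → Function.Injective j →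
        (∀ l, a (i l) (j l) ≠ 0) → ∏ l, a (i l) (j (finRotate k l)) = 0) := by
  rw [show A = transportPolytope rs cs from hA] at ha ⊢
  rw [mem_extremePoints_transportPolytope_iff ha]
  constructor
  · intro h k hk i j hi hj hdiag
    by_contra hprod
    have hc : a.IsCycle i j := ⟨hi, hj, hdiag, fun l => prod_ne_zero_iff.1 hprod l (mem_univ l)⟩
    exact Matrix.cycleMatrix_ne_zero ℝ i j hk hi hj <| h _ (Matrix.cycleMatrix_sum_row ℝ i j)
      (Matrix.cycleMatrix_sum_col ℝ i j) fun x y => hc.cycleMatrix_apply_eq_zero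
  · intro h D hrow hcol hsupp
    by_contra hD
    obtain ⟨k, hk, i, j, hc⟩ := Matrix.exists_isCycle_of_sum_eq_zero hrow hcol hD
    have hca : a.IsCycle i j := hc.mono fun x y => mt (hsupp x y)
    exact prod_ne_zero_iff.2 (fun l _ => hca.ne_zero_rotate l)
      (h k hk i j hca.injective_row hca.injective_col hca.ne_zero)
end

section
/- Every 3 × 3 doubly stochastic matrix can be written as a convex combination of the six 3 × 3 permutation matrices (Birkhoff–von Neumann in dimension 3). -/
open Finset

/-- Birkhoff–von Neumann in dimension 3: every `3 × 3` doubly stochastic matrix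
is a convex combination of the six `3 × 3` permutation matrices. -/
theorem birkhoff_dim_three (M : Matrix (Fin 3) (Fin 3) ℝ)
    (hnonneg : ∀ i j, 0 ≤ M i j)
    (hrow : ∀ i, ∑ j, M i j = 1) (hcol : ∀ j, ∑ i, M i j = 1) :
    ∃ w : Equiv.Perm (Fin 3) → ℝ, (∀ σ, 0 ≤ w σ) ∧ ∑ σ, w σ = 1 ∧
      M = ∑ σ, w σ • σ.permMatrix ℝ := by
  obtain ⟨w, hw_nonneg, hw_sum, hM⟩ := exists_eq_sum_perm_of_mem_doublyStochastic
    (mem_doublyStochastic_iff_sum.mpr ⟨hnonneg, hrow, hcol⟩)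
  exact ⟨w, hw_nonneg, hw_sum, hM.symm⟩
end

section
/- Let λ denote Lebesgue measure on [0,1], f₀(x) = x and f₁(x) = x + √2 (mod 1). Then the set S = Graph(f₀) ∪ Graph(f₁) ⊆ [0,1]² is acyclic. -/
open Set Equiv Function

/-!
Around the cycle `y₁ – x₁ – y₂ – x₂ – ⋯ – x_k – y₁` each `x_l` has two distinct neighbours, so
one of its edges lies on the graph of the identity and the other on the graph of
`g(t) = fract(t + √2)`; two identity edges can never meet at a `y`, as the `x`'s are distinct.
Hence the edge types propagate around the cycle, and `g` maps the set `{x_l}` onto itself along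
the cycle in one direction or the other. Summing `g(x_l) - x_l ∈ √2 + ℤ` over the cycle then
gives `k √2 ∈ ℤ`, contradicting irrationality.
-/

theorem Equiv.Perm.IsCycle.eq_univ_of_mapsTo {ι : Type*} [Finite ι] {σ : Perm ι}
    (hσ : σ.IsCycle) (hfix : ∀ i, σ i ≠ i) {s : Set ι} (hs : s.Nonempty) (hmaps : MapsTo σ s s) :
    s = univ := by
  obtain ⟨i, hi⟩ := hs
  refine eq_univ_of_forall fun j => ?_
  obtain ⟨m, rfl⟩ := hσ.exists_pow_eq (hfix i) (hfix j)
  exact (hmaps.iterate m) hi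

theorem Irrational.not_semiconj_fract_add {ι : Type*} [Fintype ι] [Nonempty ι]
    {α : ℝ} (hα : Irrational α) (σ : Perm ι) (x : ι → ℝ) :
    ¬ Semiconj x σ (fun t => Int.fract (t + α)) := by
  intro h
  have hsum : ∑ i, x i = ∑ i, Int.fract (x i + α) := by
    rw [← Equiv.sum_comp σ x]
    exact Finset.sum_congr rfl fun i _ => h i
  have hint : (Fintype.card ι : ℝ) * α = ((∑ i, ⌊x i + α⌋ : ℤ) : ℝ) := by
    simp only [← Int.self_sub_floor, Finset.sum_sub_distrib, Finset.sum_add_distrib,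
      Finset.sum_const, Finset.card_univ, nsmul_eq_mul] at hsum
    push_cast
    linarith
  exact (hα.natCast_mul Fintype.card_ne_zero).ne_int _ hint

/-- Alternating cycles in the union of the graphs of `id` and `g`, with vertices `x i`, `y i`
and edges `x i – y i`, `x i – y (σ i)`, follow the graph of `g` consistently in one direction. -/
theorem Equiv.Perm.IsCycle.semiconj_or_semiconj_symm_of_edges {ι β : Type*} [Finite ι]
    {σ : Perm ι} (hσ : σ.IsCycle) (hfix : ∀ i, σ i ≠ i) {g : β → β} {x y : ι → β}
    (hx : Injective x) (hy : Injective y)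
    (hedge : ∀ i, y i = x i ∨ y i = g (x i))
    (hedge' : ∀ i, y (σ i) = x i ∨ y (σ i) = g (x i)) :
    Semiconj x σ g ∨ Semiconj x σ.symm g := by
  have hback : ∀ i, y i = g (x i) → y (σ i) = x i := fun i hi =>
    (hedge' i).resolve_right fun h => hfix i (hy (h.trans hi.symm))
  obtain hg | hg := em (∃ i, y i = g (x i))
  · have hall : ∀ i, y i = g (x i) := eq_univ_iff_forall.mp <|
      hσ.eq_univ_of_mapsTo hfix hg fun i (hi : y i = g (x i)) =>
        (hedge (σ i)).resolve_left fun h => hfix i (hx (by rw [← h, hback i hi]))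
    right
    intro i
    rw [← hback _ (hall _), σ.apply_symm_apply]
    exact hall i
  · have hid : ∀ i, y i = x i := fun i => (hedge i).resolve_right (not_exists.mp hg i)
    left
    intro i
    rw [← hid (σ i)]
    exact (hedge' i).resolve_left fun h => hfix i (hx ((hid _).symm.trans h))

/-- The union `S` of the graphs of `f₀(x) = x` and `f₁(x) = x + √2 (mod 1)` on
`[0,1]` is an acyclic subset of `[0,1]²`: for every `k ≥ 2` and distinct points
`x₁,…,x_k`, `y₁,…,y_k`, at least one of the pairs
`(x₁,y₁),(x₁,y₂),(x₂,y₂),…,(x_k,y_k),(x_k,y₁)` lies outside `S`. -/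
theorem graphs_union_acyclic
    (S : Set (ℝ × ℝ))
    (hS : S = {p : ℝ × ℝ | p.1 ∈ Icc (0:ℝ) 1 ∧
        (p.2 = p.1 ∨ p.2 = Int.fract (p.1 + Real.sqrt 2))}) :
    ∀ (k : ℕ), 2 ≤ k → ∀ (x y : Fin k → ℝ),
      Function.Injective x → Function.Injective y →
      ∃ l : Fin k, (x l, y l) ∉ S ∨ (x l, y (finRotate k l)) ∉ S := by
  intro k hk x y hx hy
  by_contra! hcon
  subst hS
  have : Nonempty (Fin k) := ⟨⟨0, by omega⟩⟩
  have hfix : ∀ l, finRotate k l ≠ l := fun l =>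
    Perm.mem_support.mp (by simp [support_finRotate_of_le hk])
  rcases (isCycle_finRotate_of_le hk).semiconj_or_semiconj_symm_of_edges hfix
    (g := fun t => Int.fract (t + √2)) hx hy (fun l => (hcon l).1.2) (fun l => (hcon l).2.2)
    with h | h <;>
  exact irrational_sqrt_two.not_semiconj_fract_add _ x h
end

section
/- Let X be a smooth manifold and c : X × Y → ℝ a cost satisfying the twist condition: for y₁ ≠ y₂, the map x ↦ c(x,y₁) − c(x,y₂) has no critical points. Suppose q, r satisfy c(x,y) − q(x) − r(y) ≥ 0, and let Z be the zero set of this expression. Then for every x₀ at which q is differentiable, there is at most one y ∈ Y with (x₀, y) ∈ Z; i.e., Z ∩ (Dom Dq × Y) is contained in the graph of a single map f₁ : Dom Dq → Y. -/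
/-!
If `c(·, y) - q - r y ≥ 0` vanishes at `x₀`, then `x₀` is a minimum of `c(·, y) - q`, so
`d_x c(x₀, y) = Dq(x₀)`. Two such `y₁ ≠ y₂` would make `x₀` a critical point of
`c(·, y₁) - c(·, y₂)`, contradicting the twist condition.
-/

open Manifold

section LocalExtr

variable {E H X : Type*} [NormedAddCommGroup E] [NormedSpace ℝ E]
  [TopologicalSpace H] {I : ModelWithCorners ℝ E H} [I.Boundaryless]
  [TopologicalSpace X] [ChartedSpace H X]

/-- Fermat's theorem on a manifold without boundary, where the chart at `x₀` is open in the
model vector space. -/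
theorem IsLocalMin.mfderiv_eq_zero {g : X → ℝ} {x₀ : X} (hmin : IsLocalMin g x₀) :
    mfderiv I 𝓘(ℝ, ℝ) g x₀ = 0 := by
  by_cases hg : MDifferentiableAt I 𝓘(ℝ, ℝ) g x₀
  · rw [hg.mfderiv, I.range_eq_univ, fderivWithin_univ]
    apply IsLocalMin.fderiv_eq_zero
    have hchart : IsLocalMin (g ∘ (extChartAt I x₀).symm) (extChartAt I x₀ x₀) := by
      refine IsLocalMin.comp_continuous ?_ (continuousAt_extChartAt_symm x₀)
      rwa [extChartAt_to_inv]
    simpa [writtenInExtChartAt, chartAt_self_eq] using hchart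
  · exact mfderiv_zero_of_not_mdifferentiableAt hg

theorem mfderiv_eq_of_isLocalMin_sub {f q : X → ℝ} {x₀ : X}
    (hf : MDifferentiableAt I 𝓘(ℝ, ℝ) f x₀) (hq : MDifferentiableAt I 𝓘(ℝ, ℝ) q x₀)
    (hmin : IsLocalMin (f - q) x₀) :
    mfderiv I 𝓘(ℝ, ℝ) f x₀ = mfderiv I 𝓘(ℝ, ℝ) q x₀ :=
  sub_eq_zero.mp <| (mfderiv_sub hf hq).symm.trans hmin.mfderiv_eq_zero

end LocalExtr

/-- Under the twist condition (for `y₁ ≠ y₂` the map `x ↦ c(x,y₁) − c(x,y₂)` has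
no critical points), the zero set `Z` of `c(x,y) − q(x) − r(y) ≥ 0` meets each
fibre `{x₀} × Y` with `q` differentiable at `x₀` in at most one point, i.e. it is
contained in the graph of a single map on `Dom Dq`. -/
theorem twist_implies_graph
    {E H X : Type*} [NormedAddCommGroup E] [NormedSpace ℝ E]
    [TopologicalSpace H] (I : ModelWithCorners ℝ E H) [I.Boundaryless]
    [TopologicalSpace X] [ChartedSpace H X]
    {Y : Type*} (c : X × Y → ℝ) (q : X → ℝ) (r : Y → ℝ)
    (hc : ∀ y, MDifferentiable I 𝓘(ℝ, ℝ) (fun x => c (x, y)))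
    (htwist : ∀ y₁ y₂ : Y, y₁ ≠ y₂ →
      ∀ x, mfderiv I 𝓘(ℝ, ℝ) (fun x => c (x, y₁) - c (x, y₂)) x ≠ 0)
    (hpos : ∀ x y, 0 ≤ c (x, y) - q x - r y) :
    ∀ x₀, MDifferentiableAt I 𝓘(ℝ, ℝ) q x₀ →
      ∀ y₁ y₂ : Y, c (x₀, y₁) = q x₀ + r y₁ → c (x₀, y₂) = q x₀ + r y₂ → y₁ = y₂ := by
  intro x₀ hq y₁ y₂ h₁ h₂
  have first_order : ∀ y, c (x₀, y) = q x₀ + r y →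
      mfderiv I 𝓘(ℝ, ℝ) (fun x => c (x, y)) x₀ = mfderiv I 𝓘(ℝ, ℝ) q x₀ := by
    intro y hy
    refine mfderiv_eq_of_isLocalMin_sub (hc y x₀) hq (Filter.Eventually.of_forall fun x => ?_)
    have hxy := hpos x y
    simp only [Pi.sub_apply]
    linarith
  by_contra hne
  apply htwist y₁ y₂ hne x₀
  change mfderiv I 𝓘(ℝ, ℝ) ((fun x => c (x, y₁)) - fun x => c (x, y₂)) x₀ = 0
  rw [mfderiv_sub (hc y₁ x₀) (hc y₂ x₀), first_order y₁ h₁, first_order y₂ h₂]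
  exact sub_self _
end
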